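/- Let n ≥ 1 and let v, q : Fin n → ℝ be positive antitone sequences, and let p* : Fin n → ℝ be the recursively defined envy-free prices. Then all prices p* are strictly positive; in fact p* i ≥ v (n-1) * q (n-1) > 0 for every i. -/
import Mathlib


/-- Maximum of `f i` over indices `i > k`, well defined when `(k : ℕ) < n - 1`. -/
noncomputable def maxAbove {n : ℕ} (k : Fin n) (hk : (k : ℕ) < n - 1) (f : Fin n → ℝ) : ℝ :=
  (Finset.univ.filter fun i => k < i).sup'
    ⟨⟨(k : ℕ) + 1, by omega⟩, by
      simp only [Finset.mem_filter, Finset.mem_univ, true_and, Fin.lt_def]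
      omega⟩ f

/-- All recursively defined prices are strictly positive; in fact
`p* i ≥ v (n-1) * q (n-1) > 0` for every `i`. -/
theorem pstar_pos (n : ℕ) (hn : 1 ≤ n) (v q : Fin n → ℝ)
    (hvpos : ∀ i, 0 < v i) (hqpos : ∀ i, 0 < q i)
    (hv : Antitone v) (hq : Antitone q)
    (pstar : Fin n → ℝ)
    (hlast : pstar ⟨n - 1, by omega⟩ = v ⟨n - 1, by omega⟩ * q ⟨n - 1, by omega⟩)
    (hrec : ∀ (k : Fin n) (hk : (k : ℕ) < n - 1),
      pstar k = v k * q k - maxAbove k hk (fun i => v k * q i - pstar i)) :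
    (∀ i, 0 < pstar i) ∧
    (∀ i, pstar i ≥ v ⟨n - 1, by omega⟩ * q ⟨n - 1, by omega⟩) ∧
    0 < v ⟨n - 1, by omega⟩ * q ⟨n - 1, by omega⟩ := by
  set last : Fin n := ⟨n - 1, by omega⟩ with hlastdef
  have hMpos : 0 < v last * q last := mul_pos (hvpos last) (hqpos last)
  have key : ∀ m : ℕ, ∀ i : Fin n, n - 1 - (i : ℕ) ≤ m → pstar i ≥ v last * q last := by
    intro m
    induction m with
    | zero =>
      intro i hi
      have : (i : ℕ) = n - 1 := by have := i.isLt; omega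
      have : i = last := Fin.ext this
      rw [this, hlast]
    | succ m ih =>
      intro i hi
      by_cases hcase : (i : ℕ) < n - 1
      · have hrec' := hrec i hcase
        obtain ⟨i₀, hi₀mem, hi₀eq⟩ :=
          Finset.exists_mem_eq_sup' (⟨⟨(i : ℕ) + 1, by omega⟩, by
            simp only [Finset.mem_filter, Finset.mem_univ, true_and, Fin.lt_def]
            omega⟩ : (Finset.univ.filter fun j => i < j).Nonempty)
            (fun j => v i * q j - pstar j)
        have hlt : i < i₀ := by
          simpa using (Finset.mem_filter.mp hi₀mem).2
        have hmax : maxAbove i hcase (fun j => v i * q j - pstar j)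
            = v i * q i₀ - pstar i₀ := hi₀eq
        have hp₀ : pstar i₀ ≥ v last * q last := by
          apply ih
          have := i₀.isLt
          have := Fin.lt_def.mp hlt
          omega
        have hqle : q i₀ ≤ q i := hq (le_of_lt hlt)
        have : pstar i = v i * (q i - q i₀) + pstar i₀ := by
          rw [hrec', hmax]; ring
        rw [this]
        have : 0 ≤ v i * (q i - q i₀) :=
          mul_nonneg (le_of_lt (hvpos i)) (by linarith)
        linarith
      · have : (i : ℕ) = n - 1 := by have := i.isLt; omega
        have : i = last := Fin.ext this
        rw [this, hlast]
  have hge : ∀ i, pstar i ≥ v last * q last := fun i => key (n - 1 - i) i le_rfl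
  exact ⟨fun i => lt_of_lt_of_le hMpos (hge i), hge, hMpos⟩
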